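/- For every integer n ≥ 2 and every subset T of {2,…,n−1} containing no two consecutive integers, Σ_{w ∈ W_n, Dot(w) ⊇ T} t^{cro(w)} = t^{|T|} (1+t)^{n−1−2|T|} in ℤ[t]. -/

import Mathlib

/-!
A word of `W_n` is determined by its set `S ⊆ [1, n-1]` of crosses: rule (ii) forces a dot right
after each cross that is not followed by a cross, rule (i) forbids any other dot, and every `S`
arises this way. Then `cro(w) = |S|`, and `Dot(w) ⊇ T` says exactly that `S` contains `T - 1` and
avoids `T`. As `T` has no two consecutive elements these `2|T|` positions are distinct, the other
`n - 1 - 2|T|` positions are free, and the sum is `t^|T| (1 + t)^(n - 1 - 2|T|)`.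
-/

open Polynomial Finset

/-- `[m]_t = 1 + t + ⋯ + t^(m-1)`, with `[0]_t = 0`. -/
noncomputable def qnum (m : ℕ) : Polynomial ℤ := ∑ i ∈ Finset.range m, X ^ i

/-- Given the previous value `prev` and a (sorted) list `s₁, …, s_ℓ`, the product
`[s₁ - prev - 1]_t · [s₂ - s₁ - 1]_t ⋯ [s_ℓ - s_{ℓ-1} - 1]_t`. -/
noncomputable def gapProd : ℕ → List ℕ → Polynomial ℤ
  | _, [] => 1
  | prev, s :: rest => qnum (s - prev - 1) * gapProd s rest

/-- `S` contains no two consecutive integers. -/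
def NoTwoConsec (S : Finset ℕ) : Prop := ∀ i ∈ S, i + 1 ∉ S

instance (S : Finset ℕ) : Decidable (NoTwoConsec S) :=
  inferInstanceAs (Decidable (∀ i ∈ S, i + 1 ∉ S))

/-- The three symbols `•` (dot), `×` (cross), `␣` (blank). -/
inductive Mark : Type where
  | dot : Mark
  | cross : Mark
  | blank : Mark
  deriving DecidableEq

instance : Fintype Mark :=
  ⟨{Mark.dot, Mark.cross, Mark.blank}, fun x => by cases x <;> simp⟩

/-- The letter `w_i` (positions numbered `1, …, m`) of a sequence encoded as a
function `Fin m → Mark`; out-of-range positions read as blank. -/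
def letterAt {m : ℕ} (w : Fin m → Mark) (i : ℕ) : Mark :=
  if h : 1 ≤ i ∧ i ≤ m then w ⟨i - 1, by omega⟩ else Mark.blank

/-- Membership in `W_n`: `w = w₁ … w_{n-1}` satisfies
(i) if `w_i = •` then `i ≥ 2` and `w_{i-1} = ×`;
(ii) a cross in position `j ≤ n-2` is immediately followed by a cross or a dot. -/
def IsW (n : ℕ) (w : Fin (n - 1) → Mark) : Prop :=
  (∀ i, letterAt w i = Mark.dot → 2 ≤ i ∧ letterAt w (i - 1) = Mark.cross) ∧
  (∀ j, j ≤ n - 2 → letterAt w j = Mark.cross →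
    letterAt w (j + 1) = Mark.cross ∨ letterAt w (j + 1) = Mark.dot)

/-- `Dot(w)`, the set of positions carrying a dot. -/
def DotSet (n : ℕ) (w : Fin (n - 1) → Mark) : Finset ℕ :=
  (Finset.Icc 1 (n - 1)).filter fun i => letterAt w i = Mark.dot

/-- `cro(w)`, the number of crosses. -/
def cro (n : ℕ) (w : Fin (n - 1) → Mark) : ℕ :=
  ((Finset.Icc 1 (n - 1)).filter fun i => letterAt w i = Mark.cross).card

section PowersetSum

variable {α R : Type*} [DecidableEq α] [CommSemiring R]

theorem Finset.sum_powerset_filter_superset_disjoint_pow_card (x : R) {A B U : Finset α}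
    (hAB : Disjoint A B) (hAU : A ⊆ U) :
    ∑ S ∈ U.powerset with A ⊆ S ∧ Disjoint B S, x ^ #S =
      x ^ #A * (1 + x) ^ #(U \ (A ∪ B)) := by
  have hfilter : {S ∈ U.powerset | A ⊆ S ∧ Disjoint B S} =
      (U \ (A ∪ B)).powerset.image (A ∪ ·) := by
    ext S
    simp only [mem_filter, mem_powerset, mem_image]
    constructor
    · rintro ⟨hSU, hAS, hBS⟩
      refine ⟨S \ A, fun i hi => ?_, union_sdiff_of_subset hAS⟩
      simp only [mem_sdiff, mem_union] at hi ⊢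
      exact ⟨hSU hi.1, fun h => h.elim hi.2 (disjoint_left.1 hBS · hi.1)⟩
    · rintro ⟨S', hS', rfl⟩
      rw [subset_sdiff, disjoint_union_right] at hS'
      refine ⟨union_subset hAU hS'.1, subset_union_left, ?_⟩
      exact disjoint_union_right.2 ⟨hAB.symm, hS'.2.2.symm⟩
  have hinj : Set.InjOn (A ∪ ·) ((U \ (A ∪ B)).powerset : Set (Finset α)) := by
    intro S hS S' hS' h
    simp only [coe_powerset, Set.mem_preimage, Set.mem_powerset_iff, coe_subset,
      subset_sdiff, disjoint_union_right] at hS hS'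
    rw [← union_sdiff_cancel_left hS.2.1.symm, ← union_sdiff_cancel_left hS'.2.1.symm]
    exact congrArg (· \ A) h
  rw [hfilter, sum_image hinj, add_comm, ← sum_pow_mul_eq_add_pow, mul_sum]
  refine sum_congr rfl fun S hS => ?_
  have hAS : Disjoint A S :=
    (disjoint_union_right.1 (subset_sdiff.1 (mem_powerset.1 hS)).2).1.symm
  rw [card_union_of_disjoint hAS, pow_add, one_pow, mul_one]

end PowersetSum

section CrossSets

variable {m : ℕ}

lemma letterAt_of_notMem_Icc (w : Fin m → Mark) {i : ℕ} (hi : i ∉ Icc 1 m) :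
    letterAt w i = Mark.blank := by
  rw [mem_Icc] at hi
  rw [letterAt, dif_neg hi]

lemma mem_Icc_of_letterAt_eq {w : Fin m → Mark} {i : ℕ} {c : Mark}
    (h : letterAt w i = c) (hc : c ≠ Mark.blank) : i ∈ Icc 1 m := by
  by_contra hi
  exact hc (h ▸ letterAt_of_notMem_Icc w hi)

lemma letterAt_succ (w : Fin m → Mark) (i : Fin m) : letterAt w (i + 1) = w i := by
  rw [letterAt, dif_pos ⟨by omega, i.isLt⟩]
  rfl

def crossSet (w : Fin m → Mark) : Finset ℕ :=
  {i ∈ Icc 1 m | letterAt w i = Mark.cross}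

lemma mem_crossSet {w : Fin m → Mark} {i : ℕ} : i ∈ crossSet w ↔ letterAt w i = Mark.cross := by
  refine ⟨fun h => (mem_filter.1 h).2, fun h => mem_filter.2 ⟨?_, h⟩⟩
  exact mem_Icc_of_letterAt_eq h nofun

lemma crossSet_subset (w : Fin m → Mark) : crossSet w ⊆ Icc 1 m := filter_subset _ _

def markOfCrosses (S : Finset ℕ) (i : ℕ) : Mark :=
  if i ∈ S then Mark.cross else if i - 1 ∈ S then Mark.dot else Mark.blank

lemma markOfCrosses_eq_cross {S : Finset ℕ} {i : ℕ} :
    markOfCrosses S i = Mark.cross ↔ i ∈ S := by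
  unfold markOfCrosses; split_ifs <;> simp_all

lemma markOfCrosses_eq_dot {S : Finset ℕ} {i : ℕ} :
    markOfCrosses S i = Mark.dot ↔ i ∉ S ∧ i - 1 ∈ S := by
  unfold markOfCrosses; split_ifs <;> simp_all

lemma markOfCrosses_eq_cross_or_dot {S : Finset ℕ} {i : ℕ} (h : i - 1 ∈ S) :
    markOfCrosses S i = Mark.cross ∨ markOfCrosses S i = Mark.dot := by
  unfold markOfCrosses; split_ifs <;> simp_all

def wordOfCrosses (m : ℕ) (S : Finset ℕ) : Fin m → Mark :=
  fun i => markOfCrosses S (i + 1)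

lemma letterAt_wordOfCrosses (S : Finset ℕ) {i : ℕ} (hi : i ∈ Icc 1 m) :
    letterAt (wordOfCrosses m S) i = markOfCrosses S i := by
  rw [mem_Icc] at hi
  rw [letterAt, dif_pos hi, wordOfCrosses, Nat.sub_add_cancel hi.1]

lemma crossSet_wordOfCrosses {S : Finset ℕ} (hS : S ⊆ Icc 1 m) :
    crossSet (wordOfCrosses m S) = S := by
  ext i
  rw [mem_crossSet]
  by_cases hi : i ∈ Icc 1 m
  · rw [letterAt_wordOfCrosses S hi, markOfCrosses_eq_cross]
  · rw [letterAt_of_notMem_Icc _ hi]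
    exact iff_of_false nofun (hi <| hS ·)

end CrossSets

section WordsOfW

variable {n : ℕ}

lemma isW_wordOfCrosses {S : Finset ℕ} (hS : S ⊆ Icc 1 (n - 1)) :
    IsW n (wordOfCrosses (n - 1) S) := by
  constructor
  · intro i hi
    have hiI := mem_Icc_of_letterAt_eq hi nofun
    rw [letterAt_wordOfCrosses S hiI, markOfCrosses_eq_dot] at hi
    have hprev := mem_Icc.1 (hS hi.2)
    refine ⟨by omega, ?_⟩
    rw [letterAt_wordOfCrosses S (mem_Icc.2 hprev), markOfCrosses_eq_cross]
    exact hi.2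
  · intro j hj hcross
    have hjI := mem_Icc.1 (mem_Icc_of_letterAt_eq hcross nofun)
    rw [letterAt_wordOfCrosses S (mem_Icc.2 hjI), markOfCrosses_eq_cross] at hcross
    rw [letterAt_wordOfCrosses S (mem_Icc.2 ⟨by omega, by omega⟩)]
    exact markOfCrosses_eq_cross_or_dot (by simpa using hcross)

lemma wordOfCrosses_crossSet {w : Fin (n - 1) → Mark} (hw : IsW n w) :
    wordOfCrosses (n - 1) (crossSet w) = w := by
  funext i
  rw [wordOfCrosses, ← letterAt_succ w i]
  have hprev : letterAt w i = Mark.cross → letterAt w (i + 1) ≠ Mark.blank := fun h => by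
    rcases hw.2 i (by omega) h with h' | h' <;> rw [h'] <;> nofun
  unfold markOfCrosses
  simp only [mem_crossSet, Nat.add_sub_cancel]
  generalize hc : letterAt w (i + 1) = c at hprev
  cases c
  · simpa [hc] using (hw.1 _ hc).2
  · simp
  · simpa using hprev

lemma mem_dotSet_wordOfCrosses {S : Finset ℕ} {i : ℕ} :
    i ∈ DotSet n (wordOfCrosses (n - 1) S) ↔ i ∈ Icc 1 (n - 1) ∧ i ∉ S ∧ i - 1 ∈ S := by
  rw [DotSet, mem_filter]
  refine and_congr_right fun hi => ?_
  rw [letterAt_wordOfCrosses S hi, markOfCrosses_eq_dot]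

lemma subset_dotSet_wordOfCrosses_iff {S T : Finset ℕ} (hT : T ⊆ Icc 1 (n - 1)) :
    T ⊆ DotSet n (wordOfCrosses (n - 1) S) ↔ T.image (· - 1) ⊆ S ∧ Disjoint T S := by
  rw [image_subset_iff, disjoint_left, subset_iff]
  simp only [mem_dotSet_wordOfCrosses]
  exact ⟨fun h => ⟨fun t ht => (h ht).2.2, fun t ht => (h ht).2.1⟩,
    fun h t ht => ⟨hT ht, h.2 ht, h.1 t ht⟩⟩

open scoped Classical in
theorem sum_isW_superset_eq_sum_powerset {M : Type*} [AddCommMonoid M] (f : ℕ → M)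
    {T : Finset ℕ} (hT : T ⊆ Icc 1 (n - 1)) :
    ∑ w ∈ univ.filter (fun w : Fin (n - 1) → Mark => IsW n w ∧ T ⊆ DotSet n w), f (cro n w) =
      ∑ S ∈ (Icc 1 (n - 1)).powerset with T.image (· - 1) ⊆ S ∧ Disjoint T S, f #S := by
  refine sum_nbij' crossSet (wordOfCrosses (n - 1)) ?_ ?_ ?_ ?_ fun w _ => rfl
  · intro w hw
    obtain ⟨hW, hTw⟩ := (mem_filter.1 hw).2
    rw [← wordOfCrosses_crossSet hW, subset_dotSet_wordOfCrosses_iff hT] at hTw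
    exact mem_filter.2 ⟨mem_powerset.2 (crossSet_subset w), hTw⟩
  · intro S hS
    obtain ⟨hSU, hTS⟩ := mem_filter.1 hS
    rw [← subset_dotSet_wordOfCrosses_iff hT] at hTS
    exact mem_filter.2 ⟨mem_univ _, isW_wordOfCrosses (mem_powerset.1 hSU), hTS⟩
  · exact fun w hw => wordOfCrosses_crossSet (mem_filter.1 hw).2.1
  · exact fun S hS => crossSet_wordOfCrosses (mem_powerset.1 (mem_filter.1 hS).1)

end WordsOfW

lemma disjoint_image_pred {T : Finset ℕ} (hT : NoTwoConsec T) (h0 : 0 ∉ T) :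
    Disjoint (T.image (· - 1)) T := by
  rw [disjoint_left]
  rintro _ hpred ht
  obtain ⟨t, htT, rfl⟩ := mem_image.1 hpred
  have hpos : t ≠ 0 := fun h => h0 (h ▸ htT)
  exact hT (t - 1) ht (by rwa [Nat.sub_add_cancel (Nat.one_le_iff_ne_zero.2 hpos)])

open scoped Classical in
theorem W_genfun_superset_general (n : ℕ) (T : Finset ℕ)
    (hT1 : T ⊆ Finset.Icc 2 (n - 1)) (hT2 : NoTwoConsec T) :
    ∑ w ∈ Finset.univ.filter (fun w : Fin (n - 1) → Mark => IsW n w ∧ T ⊆ DotSet n w),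
      (X : Polynomial ℤ) ^ cro n w =
      X ^ T.card * (1 + X) ^ (n - 1 - 2 * T.card) := by
  have hT : ∀ t ∈ T, 2 ≤ t ∧ t ≤ n - 1 := fun t ht => mem_Icc.1 (hT1 ht)
  have hTU : T ⊆ Icc 1 (n - 1) := hT1.trans (Icc_subset_Icc_left one_le_two)
  have hAU : T.image (· - 1) ⊆ Icc 1 (n - 1) := by
    simp only [image_subset_iff, mem_Icc]
    exact fun t ht => by have := hT t ht; omega
  have hcard : #(T.image (· - 1)) = #T :=
    card_image_of_injOn fun a ha b hb h => by
      have := hT a ha; have := hT b hb; omega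
  have hdisj := disjoint_image_pred hT2 fun h => by have := hT 0 h; omega
  rw [sum_isW_superset_eq_sum_powerset _ hTU,
    sum_powerset_filter_superset_disjoint_pow_card _ hdisj hAU,
    card_sdiff_of_subset (union_subset hAU hTU), card_union_of_disjoint hdisj, hcard,
    Nat.card_Icc]
  congr 2
  omega

open scoped Classical in
/-- For `n ≥ 2` and `T ⊆ [2, n-1]` with no two consecutive integers:
`∑_{w ∈ W_n, Dot(w) ⊇ T} t^{cro(w)} = t^{|T|} (1+t)^{n-1-2|T|}`. -/
theorem W_genfun_superset (n : ℕ) (hn : 2 ≤ n) (T : Finset ℕ)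
    (hT1 : T ⊆ Finset.Icc 2 (n - 1)) (hT2 : NoTwoConsec T) :
    ∑ w ∈ Finset.univ.filter (fun w : Fin (n - 1) → Mark => IsW n w ∧ T ⊆ DotSet n w),
      (X : Polynomial ℤ) ^ cro n w =
      X ^ T.card * (1 + X) ^ (n - 1 - 2 * T.card) :=
  W_genfun_superset_general n T hT1 hT2
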